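/- Let L be the matrix-valued Laplacian of a matrix-weighted graph on n nodes with symmetric positive semidefinite edge weights A_ij. Suppose the graph has a positive spanning tree, i.e., the simple graph on the n nodes whose edges are exactly those pairs (i,j) with A_ij positive definite is connected. Then null(L) = R, and consequently for every initial state x(0) ∈ ℝ^{dn} the solution x(t) = exp(−tL) x(0) converges as t → ∞ to the average consensus value x_f = 1_n ⊗ ((1/n) Σ_{i=1}^n x_i(0)). -/

import Mathlib

/-
`2 xᵀ L x = ∑ᵢ ∑ⱼ (xᵢ - xⱼ)ᵀ Aᵢⱼ (xᵢ - xⱼ) ≥ 0`, so `L` is positive semidefinite and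
`L x = 0` forces `xᵢ = xⱼ` across every positive-definite edge, hence, along a spanning tree of such
edges, at all nodes. In an orthonormal eigenbasis of `L`, `exp (-t L)` fixes the components with
eigenvalue `0` and damps all others, so `exp (-t L) x(0)` tends to the orthogonal projection of
`x(0)` onto `ker L = R`, which is the block average.
-/

open Matrix Finset Filter

/-- The matrix-valued Laplacian of a matrix-weighted graph on `n` nodes with
state dimension `d`: the `(i,j)` off-diagonal block is `-A i j` and the `i`-th
diagonal block is `∑ k ≠ i, A i k`. -/
noncomputable def mwLaplacian {n d : ℕ} (A : Fin n → Fin n → Matrix (Fin d) (Fin d) ℝ) :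
    Matrix (Fin n × Fin d) (Fin n × Fin d) ℝ :=
  fun p q =>
    if p.1 = q.1 then ∑ k ∈ Finset.univ.erase p.1, A p.1 k p.2 q.2
    else -(A p.1 q.1 p.2 q.2)

/-- Membership in the consensus subspace `R = range (1ₙ ⊗ I_d)`:
all blocks of `x` are equal. -/
def isConsensus {n d : ℕ} (x : Fin n × Fin d → ℝ) : Prop :=
  ∃ v : Fin d → ℝ, ∀ p : Fin n × Fin d, x p = v p.2

/-- The Euclidean norm on `ι → ℝ`. -/
noncomputable def euclNorm {ι : Type*} [Fintype ι] (x : ι → ℝ) : ℝ :=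
  Real.sqrt (x ⬝ᵥ x)

open Function Topology

theorem SimpleGraph.Reachable.eq_of_forall_adj {V α : Type*} {G : SimpleGraph V} {f : V → α}
    (h : ∀ u v, G.Adj u v → f u = f v) {u v : V} (huv : G.Reachable u v) : f u = f v := by
  rw [SimpleGraph.reachable_iff_reflTransGen] at huv
  simpa [Relation.reflTransGen_eq_self] using huv.lift f h

theorem Matrix.PosDef.eq_zero_of_dotProduct_mulVec_self_eq_zero {m : Type*} [Fintype m]
    {M : Matrix m m ℝ} (hM : M.PosDef) {x : m → ℝ} (hx : x ⬝ᵥ (M *ᵥ x) = 0) : x = 0 := by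
  by_contra hne
  simpa [hx] using hM.dotProduct_mulVec_pos hne

theorem Real.tendsto_exp_neg_mul_mul_atTop {μ : ℝ} (hμ : 0 ≤ μ) (a : ℝ) :
    Tendsto (fun t => Real.exp (-t * μ) * a) atTop (𝓝 (if μ = 0 then a else 0)) := by
  rcases hμ.eq_or_lt with rfl | hμ
  · simp
  · simpa [hμ.ne'] using
      (Real.tendsto_exp_atBot.comp (tendsto_neg_atTop_atBot.atBot_mul_const hμ)).mul_const a

namespace Matrix.IsHermitian

variable {N : Type*} [Fintype N] [DecidableEq N] {L : Matrix N N ℝ} (hL : L.IsHermitian)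

theorem exp_smul_eq (s : ℝ) :
    NormedSpace.exp (s • L) = (hL.eigenvectorUnitary : Matrix N N ℝ) *
      diagonal (fun k => Real.exp (s * hL.eigenvalues k)) *
        star (hL.eigenvectorUnitary : Matrix N N ℝ) := by
  have hsL : s • L = (hL.eigenvectorUnitary : Matrix N N ℝ) * diagonal (s • hL.eigenvalues) *
      star (hL.eigenvectorUnitary : Matrix N N ℝ) := by
    rw [diagonal_smul, Matrix.mul_smul, Matrix.smul_mul]
    conv_lhs => rw [hL.spectral_theorem]
    simp
  have h := exp_units_conj (Unitary.toUnits hL.eigenvectorUnitary) (diagonal (s • hL.eigenvalues))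
  simp only [Unitary.val_toUnits_apply, Unitary.val_inv_toUnits_apply, UnitaryGroup.inv_val,
    exp_diagonal] at h
  rw [hsL, h]
  congr 3
  ext k
  simp [Real.exp_eq_exp_ℝ]

theorem star_eigenvectorUnitary_mulVec_apply (x : N → ℝ) (k : N) :
    (star (hL.eigenvectorUnitary : Matrix N N ℝ) *ᵥ x) k = ⇑(hL.eigenvectorBasis k) ⬝ᵥ x := by
  simp [mulVec, dotProduct, star_apply]

theorem eigenvectorBasis_dotProduct_eq_zero {c : N → ℝ} (hc : L *ᵥ c = 0) {k : N}
    (hk : hL.eigenvalues k ≠ 0) : ⇑(hL.eigenvectorBasis k) ⬝ᵥ c = 0 := by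
  have hLt : Lᵀ = L := (conjTranspose_eq_transpose_of_trivial L).symm.trans hL
  have h : hL.eigenvalues k * (⇑(hL.eigenvectorBasis k) ⬝ᵥ c) = 0 := by
    rw [← smul_eq_mul, ← smul_dotProduct, ← hL.mulVec_eigenvectorBasis, dotProduct_comm,
      dotProduct_mulVec, ← mulVec_transpose, hLt, hc, zero_dotProduct]
  exact (mul_eq_zero.1 h).resolve_left hk

/-- The orthogonal projection onto `ker L`, written in an orthonormal eigenbasis of `L`. -/
noncomputable def kerProj (x : N → ℝ) : N → ℝ :=
  (hL.eigenvectorUnitary : Matrix N N ℝ) *ᵥ fun k =>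
    if hL.eigenvalues k = 0 then (star (hL.eigenvectorUnitary : Matrix N N ℝ) *ᵥ x) k else 0

theorem kerProj_eq {x c : N → ℝ} (hc : L *ᵥ c = 0)
    (horth : ∀ y, L *ᵥ y = 0 → y ⬝ᵥ (x - c) = 0) : hL.kerProj x = c := by
  suffices h : (fun k => if hL.eigenvalues k = 0 then
      (star (hL.eigenvectorUnitary : Matrix N N ℝ) *ᵥ x) k else 0) =
        star (hL.eigenvectorUnitary : Matrix N N ℝ) *ᵥ c by
    rw [kerProj, h, mulVec_mulVec, Unitary.mul_star_self_of_mem hL.eigenvectorUnitary.2, one_mulVec]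
  ext k
  rw [star_eigenvectorUnitary_mulVec_apply, star_eigenvectorUnitary_mulVec_apply]
  split_ifs with hk
  · have hker : L *ᵥ ⇑(hL.eigenvectorBasis k) = 0 := by
      rw [hL.mulVec_eigenvectorBasis, hk, zero_smul]
    rw [← sub_eq_zero, ← dotProduct_sub]
    exact horth _ hker
  · exact (hL.eigenvectorBasis_dotProduct_eq_zero hc hk).symm

end Matrix.IsHermitian

theorem Matrix.PosSemidef.tendsto_exp_neg_smul_mulVec {N : Type*} [Fintype N] [DecidableEq N]
    {L : Matrix N N ℝ} (hL : L.PosSemidef) (x : N → ℝ) :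
    Tendsto (fun t : ℝ => NormedSpace.exp (-(t • L)) *ᵥ x) atTop
      (𝓝 (hL.isHermitian.kerProj x)) := by
  set U := (hL.isHermitian.eigenvectorUnitary : Matrix N N ℝ)
  set μ := hL.isHermitian.eigenvalues
  have hexp : ∀ t : ℝ, NormedSpace.exp (-(t • L)) *ᵥ x =
      U *ᵥ fun k => Real.exp (-t * μ k) * (star U *ᵥ x) k := by
    intro t
    rw [← neg_smul, hL.isHermitian.exp_smul_eq, ← mulVec_mulVec, ← mulVec_mulVec]
    congr 1
    ext k
    exact mulVec_diagonal _ _ k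
  have hcoord : Tendsto (fun t : ℝ => fun k => Real.exp (-t * μ k) * (star U *ᵥ x) k) atTop
      (𝓝 fun k => if μ k = 0 then (star U *ᵥ x) k else 0) :=
    tendsto_pi_nhds.2 fun k => Real.tendsto_exp_neg_mul_mul_atTop (hL.eigenvalues_nonneg k) _
  have hU : Continuous fun v : N → ℝ => U *ᵥ v := continuous_const.matrix_mulVec continuous_id
  simp only [hexp]
  exact (hU.tendsto _).comp hcoord

section Laplacian

variable {n d : ℕ} (A : Fin n → Fin n → Matrix (Fin d) (Fin d) ℝ)

theorem mwLaplacian_mulVec_apply (x : Fin n × Fin d → ℝ) (i : Fin n) (p : Fin d) :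
    (mwLaplacian A *ᵥ x) (i, p) = ∑ k, (A i k *ᵥ (curry x i - curry x k)) p := by
  have hdeg : ∑ q, (∑ k ∈ univ.erase i, A i k p q) * x (i, q)
      = ∑ k ∈ univ.erase i, (A i k *ᵥ curry x i) p := by
    simp only [Finset.sum_mul, mulVec, dotProduct, curry_apply]
    exact Finset.sum_comm
  rw [← Finset.sum_erase (f := fun k => (A i k *ᵥ (curry x i - curry x k)) p) univ (a := i)
    (by simp)]
  simp only [mulVec_sub, Pi.sub_apply, Finset.sum_sub_distrib, ← hdeg]
  simp only [mulVec, dotProduct, Fintype.sum_prod_type, mwLaplacian]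
  rw [← Finset.add_sum_erase _ _ (mem_univ i)]
  simp only [↓reduceIte]
  rw [sub_eq_add_neg, ← Finset.sum_neg_distrib]
  refine congrArg _ (Finset.sum_congr rfl fun k hk => ?_)
  rw [← Finset.sum_neg_distrib]
  refine Finset.sum_congr rfl fun q _ => ?_
  rw [if_neg (Finset.ne_of_mem_erase hk).symm, curry_apply, neg_mul]

theorem two_mul_dotProduct_mwLaplacian_mulVec (hsym : ∀ i j, A i j = A j i)
    (x : Fin n × Fin d → ℝ) :
    2 * (x ⬝ᵥ (mwLaplacian A *ᵥ x)) =
      ∑ i, ∑ k, (curry x i - curry x k) ⬝ᵥ (A i k *ᵥ (curry x i - curry x k)) := by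
  set S := ∑ i, ∑ k, curry x i ⬝ᵥ (A i k *ᵥ (curry x i - curry x k))
  have hS : x ⬝ᵥ (mwLaplacian A *ᵥ x) = S := by
    rw [dotProduct, Fintype.sum_prod_type]
    simp only [mwLaplacian_mulVec_apply, Finset.mul_sum, S, dotProduct, curry_apply]
    exact Finset.sum_congr rfl fun i _ => Finset.sum_comm
  have hswap : ∑ i, ∑ k, curry x k ⬝ᵥ (A i k *ᵥ (curry x i - curry x k)) = -S := by
    rw [Finset.sum_comm, ← Finset.sum_neg_distrib]
    refine Finset.sum_congr rfl fun i _ => ?_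
    rw [← Finset.sum_neg_distrib]
    refine Finset.sum_congr rfl fun k _ => ?_
    rw [hsym, ← neg_sub, mulVec_neg, dotProduct_neg]
  simp only [sub_dotProduct, Finset.sum_sub_distrib, hswap, hS]
  ring

theorem isHermitian_mwLaplacian (hA : ∀ i j, (A i j).IsHermitian) (hsym : ∀ i j, A i j = A j i) :
    (mwLaplacian A).IsHermitian := by
  refine IsHermitian.ext fun p q => ?_
  simp only [mwLaplacian, star_trivial]
  by_cases h : q.1 = p.1
  · rw [if_pos h, if_pos h.symm, h]
    exact Finset.sum_congr rfl fun k _ => by simpa using ((hA p.1 k).apply q.2 p.2).symm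
  · rw [if_neg h, if_neg (Ne.symm h), hsym]
    simpa using ((hA p.1 q.1).apply q.2 p.2).symm

variable {A}

theorem edge_energy_nonneg (hpsd : ∀ i j, (A i j).PosSemidef) (x : Fin n × Fin d → ℝ)
    (i k : Fin n) : 0 ≤ (curry x i - curry x k) ⬝ᵥ (A i k *ᵥ (curry x i - curry x k)) := by
  simpa using (hpsd i k).dotProduct_mulVec_nonneg (curry x i - curry x k)

theorem posSemidef_mwLaplacian (hpsd : ∀ i j, (A i j).PosSemidef) (hsym : ∀ i j, A i j = A j i) :
    (mwLaplacian A).PosSemidef := by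
  refine .of_dotProduct_mulVec_nonneg
    (isHermitian_mwLaplacian A (fun i j => (hpsd i j).isHermitian) hsym) fun x => ?_
  have h := two_mul_dotProduct_mwLaplacian_mulVec A hsym x
  have : 0 ≤ 2 * (x ⬝ᵥ (mwLaplacian A *ᵥ x)) :=
    h ▸ Finset.sum_nonneg fun i _ => Finset.sum_nonneg fun k _ => edge_energy_nonneg hpsd x i k
  rw [star_trivial]
  linarith

theorem edge_energy_eq_zero_of_mwLaplacian_mulVec_eq_zero (hpsd : ∀ i j, (A i j).PosSemidef)
    (hsym : ∀ i j, A i j = A j i) {x : Fin n × Fin d → ℝ} (hx : mwLaplacian A *ᵥ x = 0)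
    (i k : Fin n) : (curry x i - curry x k) ⬝ᵥ (A i k *ᵥ (curry x i - curry x k)) = 0 := by
  have h := two_mul_dotProduct_mwLaplacian_mulVec A hsym x
  rw [hx, dotProduct_zero, mul_zero, eq_comm, Fintype.sum_eq_zero_iff_of_nonneg fun i =>
    Finset.sum_nonneg fun k _ => edge_energy_nonneg hpsd x i k] at h
  have hi := congrFun h i
  rw [Pi.zero_apply, Fintype.sum_eq_zero_iff_of_nonneg (edge_energy_nonneg hpsd x i)] at hi
  exact congrFun hi k

theorem mwLaplacian_mulVec_eq_zero_of_isConsensus {x : Fin n × Fin d → ℝ} (hx : isConsensus x) :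
    mwLaplacian A *ᵥ x = 0 := by
  obtain ⟨v, hv⟩ := hx
  have hblock : ∀ i, curry x i = v := fun i => funext fun q => hv (i, q)
  ext ⟨i, p⟩
  simp [mwLaplacian_mulVec_apply, hblock]

theorem isConsensus_of_mwLaplacian_mulVec_eq_zero (hpsd : ∀ i j, (A i j).PosSemidef)
    (hsym : ∀ i j, A i j = A j i)
    (htree : (SimpleGraph.fromRel fun i j : Fin n => (A i j).PosDef).Connected)
    {x : Fin n × Fin d → ℝ} (hx : mwLaplacian A *ᵥ x = 0) : isConsensus x := by
  have hedge (i k : Fin n) (hik : (A i k).PosDef) : curry x i = curry x k :=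
    sub_eq_zero.1 <| hik.eq_zero_of_dotProduct_mulVec_self_eq_zero <|
      edge_energy_eq_zero_of_mwLaplacian_mulVec_eq_zero hpsd hsym hx i k
  have hadj : ∀ i k, (SimpleGraph.fromRel fun i j : Fin n => (A i j).PosDef).Adj i k →
      curry x i = curry x k := by
    rintro i k ⟨-, hik | hki⟩
    exacts [hedge i k hik, (hedge k i hki).symm]
  obtain ⟨i₀⟩ := htree.nonempty
  exact ⟨curry x i₀, fun p => congrFun ((htree.preconnected p.1 i₀).eq_of_forall_adj hadj) p.2⟩

theorem mwLaplacian_mulVec_eq_zero_iff (hpsd : ∀ i j, (A i j).PosSemidef)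
    (hsym : ∀ i j, A i j = A j i)
    (htree : (SimpleGraph.fromRel fun i j : Fin n => (A i j).PosDef).Connected)
    (x : Fin n × Fin d → ℝ) : mwLaplacian A *ᵥ x = 0 ↔ isConsensus x :=
  ⟨isConsensus_of_mwLaplacian_mulVec_eq_zero hpsd hsym htree,
    mwLaplacian_mulVec_eq_zero_of_isConsensus⟩

end Laplacian

theorem isConsensus.dotProduct_sub_average_eq_zero {n d : ℕ} [NeZero n]
    {y : Fin n × Fin d → ℝ} (hy : isConsensus y) (x : Fin n × Fin d → ℝ) :
    y ⬝ᵥ (x - fun p => (n : ℝ)⁻¹ * ∑ i : Fin n, x (i, p.2)) = 0 := by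
  obtain ⟨v, hv⟩ := hy
  rw [dotProduct, Fintype.sum_prod_type_right]
  refine Finset.sum_eq_zero fun q _ => ?_
  simp only [hv, Pi.sub_apply, ← Finset.mul_sum, Finset.sum_sub_distrib, Finset.sum_const,
    card_univ, Fintype.card_fin, nsmul_eq_mul]
  rw [inv_mul_cancel_left₀ (Nat.cast_ne_zero.2 (NeZero.ne n)), sub_self, mul_zero]

theorem positive_spanning_tree_average_consensus_general {n d : ℕ}
    (A : Fin n → Fin n → Matrix (Fin d) (Fin d) ℝ)
    (hpsd : ∀ i j, (A i j).PosSemidef)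
    (hsym : ∀ i j, A i j = A j i)
    (htree : (SimpleGraph.fromRel (fun i j : Fin n => (A i j).PosDef)).Connected) :
    (∀ x : Fin n × Fin d → ℝ, (mwLaplacian A).mulVec x = 0 ↔ isConsensus x) ∧
      ∀ x0 : Fin n × Fin d → ℝ,
        Tendsto (fun t : ℝ => (NormedSpace.exp (-(t • mwLaplacian A))).mulVec x0)
          atTop (nhds (fun p => (n : ℝ)⁻¹ * ∑ i : Fin n, x0 (i, p.2))) := by
  have hker := mwLaplacian_mulVec_eq_zero_iff hpsd hsym htree
  refine ⟨hker, fun x₀ => ?_⟩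
  obtain ⟨i₀⟩ := htree.nonempty
  have : NeZero n := NeZero.of_pos i₀.pos
  have hL := posSemidef_mwLaplacian hpsd hsym
  convert hL.tendsto_exp_neg_smul_mulVec x₀ using 2
  refine (hL.isHermitian.kerProj_eq ?_ fun y hy => ?_).symm
  · exact (hker _).2 ⟨fun q => (n : ℝ)⁻¹ * ∑ i : Fin n, x₀ (i, q), fun _ => rfl⟩
  · exact ((hker y).1 hy).dotProduct_sub_average_eq_zero x₀

/-- If a matrix-weighted graph with symmetric positive semidefinite
edge weights has a positive spanning tree (the simple graph of positive-definite
edges is connected), then `null(L) = R` and the consensus flow converges to the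
average consensus value from every initial state. -/
theorem positive_spanning_tree_average_consensus {n d : ℕ} (hn : 2 ≤ n) (hd : 1 ≤ d)
    (A : Fin n → Fin n → Matrix (Fin d) (Fin d) ℝ)
    (hpsd : ∀ i j, (A i j).PosSemidef)
    (hsym : ∀ i j, A i j = A j i)
    (hdiag : ∀ i, A i i = 0)
    (htree : (SimpleGraph.fromRel (fun i j : Fin n => (A i j).PosDef)).Connected) :
    (∀ x : Fin n × Fin d → ℝ, (mwLaplacian A).mulVec x = 0 ↔ isConsensus x) ∧
      ∀ x0 : Fin n × Fin d → ℝ,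
        Tendsto (fun t : ℝ => (NormedSpace.exp (-(t • mwLaplacian A))).mulVec x0)
          atTop (nhds (fun p => (n : ℝ)⁻¹ * ∑ i : Fin n, x0 (i, p.2))) :=
  positive_spanning_tree_average_consensus_general A hpsd hsym htree
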